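/- Let A,B,C,D,p,q be real numbers with AD−BC=1 and B≠0, let f,ψ ∈ L¹(ℝ)∩L²(ℝ), and fix ζ > 0. Then the SAFT in the variable t of the function t ↦ A_ψ f(t,ζ) satisfies, for every ω ∈ ℝ, F_SAFT[A_ψ f(·,ζ)](ω) = √ζ · exp{ (i/(2B))( 2ωζ(Dp−Bq) − Dω²ζ² ) } · f̂_Λ(ω) · Ψ̂_Λ(ζω, ζ), where Ψ(x,ζ) = exp{ (i/(2B))( Ax²(ζ²−1) + 2xp(ζ−1) ) } ψ^*(−x) and Ψ̂_Λ(·,ζ) is the SAFT of Ψ(·,ζ) in its first variable. -/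

import Mathlib

/-!
Both transforms integrate against chirps `exp (i r / (2B))` with real quadratic phases `r`, and
the NSAWT correlates `f` with a chirp-modulated dilate of `ψ`. Since `f` and `ψ` are integrable
and chirps are unimodular, Fubini lets us integrate in `t` first; the substitution
`t = x + ζ y` then splits the combined phase into the SAFT phase of `f` at `ω`, the SAFT phase of
`Ψ(·, ζ)` at `ζ ω` (which absorbs the chirp of the window) and a constant, while the Jacobian `ζ`
and the normalisation `ζ^{-1/2}` combine to `√ζ`.
-/

open MeasureTheory Real Set

/-- The special affine Fourier transform (SAFT) with parameter matrix
`[[A, B], [C, D]]` and offset `(p, q)` (the kernel does not involve `C`). -/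
noncomputable def SAFT (A B D p q : ℝ) (f : ℝ → ℂ) (ω : ℝ) : ℂ :=
  (Real.sqrt (2 * Real.pi * |B|) : ℂ)⁻¹ *
    ∫ x : ℝ, f x * Complex.exp ((Complex.I / (2 * (B : ℂ))) *
      ((A : ℂ) * (x : ℂ) ^ 2 + 2 * (x : ℂ) * ((p : ℂ) - (ω : ℂ))
        - 2 * (ω : ℂ) * ((D : ℂ) * (p : ℂ) - (B : ℂ) * (q : ℂ))
        + (D : ℂ) * (ω : ℂ) ^ 2))

/-- The auxiliary analyzing function `Ψ(x, ζ)` built from the wavelet `ψ`. -/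
noncomputable def bigPsi (A B p : ℝ) (ψ : ℝ → ℂ) (ζ : ℝ) (x : ℝ) : ℂ :=
  Complex.exp ((Complex.I / (2 * (B : ℂ))) *
      ((A : ℂ) * (x : ℂ) ^ 2 * ((ζ : ℂ) ^ 2 - 1) + 2 * (x : ℂ) * (p : ℂ) * ((ζ : ℂ) - 1))) *
    (starRingEnd ℂ) (ψ (-x))

/-- The analyzing window of the novel special affine wavelet transform. -/
noncomputable def waveWindow (A B : ℝ) (ψ : ℝ → ℂ) (t ζ : ℝ) (x : ℝ) : ℂ :=
  ((Real.sqrt (2 * Real.pi * |B|))⁻¹ * (Real.sqrt ζ)⁻¹ : ℝ) *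
    ψ ((x - t) / ζ) *
    Complex.exp (Complex.I * (A : ℂ) * (x : ℂ) * ((t : ℂ) - (x : ℂ)) / (B : ℂ))

/-- The novel special affine wavelet transform (NSAWT). -/
noncomputable def NSAWT (A B : ℝ) (ψ : ℝ → ℂ) (f : ℝ → ℂ) (t ζ : ℝ) : ℂ :=
  ∫ x : ℝ, f x * (starRingEnd ℂ) (waveWindow A B ψ t ζ x)

noncomputable def chirp (B r : ℝ) : ℂ := Complex.exp (Complex.I / (2 * B) * r)

def saftPhase (A B D p q ω x : ℝ) : ℝ :=
  A * x ^ 2 + 2 * x * (p - ω) - 2 * ω * (D * p - B * q) + D * ω ^ 2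

/-- The phase of the integrand of the SAFT at `ω` of the NSAWT, at time `t` and position `x`. -/
def nsawtPhase (A B D p q ω t x : ℝ) : ℝ :=
  2 * A * x * (x - t) + saftPhase A B D p q ω t

lemma chirp_add (B r s : ℝ) : chirp B (r + s) = chirp B r * chirp B s := by
  rw [chirp, chirp, chirp, ← Complex.exp_add]; push_cast; ring_nf

lemma norm_chirp (B r : ℝ) : ‖chirp B r‖ = 1 := by
  rw [chirp, show Complex.I / (2 * B) * r = ((r / (2 * B) : ℝ) : ℂ) * Complex.I by push_cast; ring,
    Complex.norm_exp_ofReal_mul_I]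

@[fun_prop]
lemma continuous_chirp (B : ℝ) : Continuous (chirp B) := by
  unfold chirp; fun_prop

lemma SAFT_eq_integral_chirp (A B D p q : ℝ) (g : ℝ → ℂ) (ω : ℝ) :
    SAFT A B D p q g ω
      = ((√(2 * π * |B|))⁻¹ : ℝ) * ∫ x, g x * chirp B (saftPhase A B D p q ω x) := by
  rw [SAFT, Complex.ofReal_inv]
  congr 3 with x
  rw [chirp, saftPhase]
  push_cast
  ring_nf

lemma conj_waveWindow (A B : ℝ) (ψ : ℝ → ℂ) (t ζ x : ℝ) :
    (starRingEnd ℂ) (waveWindow A B ψ t ζ x)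
      = ((√(2 * π * |B|))⁻¹ * (√ζ)⁻¹ : ℝ) * (starRingEnd ℂ) (ψ ((x - t) / ζ))
        * chirp B (2 * A * x * (x - t)) := by
  rw [waveWindow, map_mul, map_mul, Complex.conj_ofReal, chirp, ← Complex.exp_conj]
  simp only [map_mul, map_div₀, map_sub, Complex.conj_I, Complex.conj_ofReal]
  push_cast
  ring_nf

lemma NSAWT_mul_chirp (A B D p q : ℝ) (ψ f : ℝ → ℂ) (ω t ζ : ℝ) :
    NSAWT A B ψ f t ζ * chirp B (saftPhase A B D p q ω t)
      = ((√(2 * π * |B|))⁻¹ * (√ζ)⁻¹ : ℝ) *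
        ∫ x, f x * (starRingEnd ℂ) (ψ ((x - t) / ζ)) * chirp B (nsawtPhase A B D p q ω t x) := by
  rw [NSAWT, ← integral_mul_const, ← integral_const_mul]
  congr 1 with x
  rw [conj_waveWindow, nsawtPhase, chirp_add]
  ring

lemma bigPsi_eq_chirp_mul (A B p : ℝ) (ψ : ℝ → ℂ) (ζ y : ℝ) :
    bigPsi A B p ψ ζ y
      = chirp B (A * y ^ 2 * (ζ ^ 2 - 1) + 2 * y * p * (ζ - 1)) * (starRingEnd ℂ) (ψ (-y)) := by
  rw [bigPsi, chirp]
  push_cast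
  rfl

lemma nsawtPhase_add_mul (A B D p q ω ζ x y : ℝ) :
    nsawtPhase A B D p q ω (x + ζ * y) x
      = saftPhase A B D p q ω x + (2 * ω * ζ * (D * p - B * q) - D * ω ^ 2 * ζ ^ 2)
        + ((A * y ^ 2 * (ζ ^ 2 - 1) + 2 * y * p * (ζ - 1)) + saftPhase A B D p q (ζ * ω) y) := by
  unfold nsawtPhase saftPhase; ring

lemma integral_conj_mul_chirp_nsawtPhase (A B D p q : ℝ) (ψ : ℝ → ℂ) (ω ζ x : ℝ) :
    ∫ y, (starRingEnd ℂ) (ψ (-y)) * chirp B (nsawtPhase A B D p q ω (x + ζ * y) x)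
      = chirp B (saftPhase A B D p q ω x)
        * chirp B (2 * ω * ζ * (D * p - B * q) - D * ω ^ 2 * ζ ^ 2)
        * ∫ y, bigPsi A B p ψ ζ y * chirp B (saftPhase A B D p q (ζ * ω) y) := by
  rw [← integral_const_mul]
  congr 1 with y
  rw [nsawtPhase_add_mul, chirp_add, chirp_add, chirp_add _ _ (saftPhase _ _ _ _ _ _ _),
    bigPsi_eq_chirp_mul]
  ring

lemma integral_comp_add_mul {E : Type*} [NormedAddCommGroup E] [NormedSpace ℝ E]
    (F : ℝ → E) (x ζ : ℝ) :
    ∫ y, F (x + ζ * y) = |ζ⁻¹| • ∫ t, F t := by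
  rw [Measure.integral_comp_mul_left (fun u => F (x + u)), integral_add_left_eq_self]

lemma integral_integral_mul_comp_div_sub {f g : ℝ → ℂ} (hf : Integrable f) (hg : Integrable g)
    {Φ : ℝ → ℝ → ℂ} (hΦ : AEStronglyMeasurable (Function.uncurry Φ) (volume.prod volume))
    {M : ℝ} (hM : ∀ t x, ‖Φ t x‖ ≤ M) {ζ : ℝ} (hζ : 0 < ζ) :
    ∫ t, ∫ x, f x * g ((x - t) / ζ) * Φ t x = ζ * ∫ x, f x * ∫ y, g (-y) * Φ (x + ζ * y) x := by
  have hconv : Integrable (fun z : ℝ × ℝ => f z.2 * g (-ζ⁻¹ * (z.1 - z.2)))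
      (volume.prod volume) := by
    simpa using hf.convolution_integrand (ContinuousLinearMap.mul ℝ ℂ)
      (hg.comp_mul_left' (by simpa using hζ.ne' : -ζ⁻¹ ≠ 0))
  have hint : Integrable (fun z : ℝ × ℝ => f z.2 * g ((z.2 - z.1) / ζ) * Φ z.1 z.2)
      (volume.prod volume) := by
    simp_rw [show ∀ t x : ℝ, (x - t) / ζ = -ζ⁻¹ * (t - x) from fun t x => by field_simp; ring]
    exact hconv.mul_bdd (c := M) hΦ (Filter.Eventually.of_forall fun z => hM z.1 z.2)
  rw [integral_integral_swap hint, ← integral_const_mul]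
  congr 1 with x
  have hsub : ∫ y, g (-y) * Φ (x + ζ * y) x = ζ⁻¹ • ∫ t, g ((x - t) / ζ) * Φ t x := by
    rw [← abs_of_pos (inv_pos.2 hζ), ← integral_comp_add_mul _ x ζ]
    congr 1 with y
    rw [show (x - (x + ζ * y)) / ζ = -y by field_simp; ring]
  rw [hsub, Complex.real_smul, ← integral_const_mul, ← integral_const_mul, ← integral_const_mul]
  congr 1 with t
  have hζ' : (ζ : ℂ) ≠ 0 := by exact_mod_cast hζ.ne'
  push_cast
  field_simp

theorem saft_of_nsawt_general (A B D p q : ℝ)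
    (f ψ : ℝ → ℂ) (hf1 : Integrable f)
    (hψ1 : Integrable ψ)
    (ζ : ℝ) (hζ : 0 < ζ) (ω : ℝ) :
    SAFT A B D p q (fun t : ℝ => NSAWT A B ψ f t ζ) ω
      = (Real.sqrt ζ : ℂ) *
        Complex.exp ((Complex.I / (2 * (B : ℂ))) *
          (2 * (ω : ℂ) * (ζ : ℂ) * ((D : ℂ) * (p : ℂ) - (B : ℂ) * (q : ℂ))
            - (D : ℂ) * (ω : ℂ) ^ 2 * (ζ : ℂ) ^ 2)) *
        SAFT A B D p q f ω * SAFT A B D p q (bigPsi A B p ψ ζ) (ζ * ω) := by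
  have hψc : Integrable (fun u => (starRingEnd ℂ) (ψ u)) :=
    memLp_one_iff_integrable.1 (memLp_one_iff_integrable.2 hψ1).star
  have hΦ : AEStronglyMeasurable (Function.uncurry fun t x => chirp B (nsawtPhase A B D p q ω t x))
      (volume.prod volume) := by
    refine Continuous.aestronglyMeasurable ?_
    simp only [nsawtPhase, saftPhase, Function.uncurry_def]
    fun_prop
  have hsqrt : (√ζ)⁻¹ * ζ = √ζ := by rw [inv_mul_eq_div, Real.div_sqrt]
  rw [SAFT_eq_integral_chirp, SAFT_eq_integral_chirp, SAFT_eq_integral_chirp]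
  simp_rw [NSAWT_mul_chirp, integral_const_mul]
  rw [integral_integral_mul_comp_div_sub hf1 hψc hΦ (fun t x => (norm_chirp B _).le) hζ]
  simp_rw [integral_conj_mul_chirp_nsawtPhase, ← mul_assoc, integral_mul_const]
  rw [mul_assoc _ _ (ζ : ℂ), ← Complex.ofReal_mul, mul_assoc _ (√ζ)⁻¹ ζ, hsqrt, chirp]
  push_cast
  ring

/-- Relationship between the SAFT and the NSAWT: the SAFT (in the time variable)
of the NSAWT factorizes as a phase times the SAFTs of `f` and `Ψ(·, ζ)`. -/
theorem saft_of_nsawt (A B C D p q : ℝ) (hΛ : A * D - B * C = 1) (hB : B ≠ 0)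
    (f ψ : ℝ → ℂ) (hf1 : Integrable f) (hf2 : MemLp f 2)
    (hψ1 : Integrable ψ) (hψ2 : MemLp ψ 2)
    (ζ : ℝ) (hζ : 0 < ζ) (ω : ℝ) :
    SAFT A B D p q (fun t : ℝ => NSAWT A B ψ f t ζ) ω
      = (Real.sqrt ζ : ℂ) *
        Complex.exp ((Complex.I / (2 * (B : ℂ))) *
          (2 * (ω : ℂ) * (ζ : ℂ) * ((D : ℂ) * (p : ℂ) - (B : ℂ) * (q : ℂ))
            - (D : ℂ) * (ω : ℂ) ^ 2 * (ζ : ℂ) ^ 2)) *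
        SAFT A B D p q f ω * SAFT A B D p q (bigPsi A B p ψ ζ) (ζ * ω) :=
  saft_of_nsawt_general A B D p q f ψ hf1 hψ1 ζ hζ ω
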